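/- arXiv:1909.00354 — 3 statements merged into one kernel-verified Lean document; each statement's English description precedes it below -/
import Mathlib

section
/- If M ⊆ ℝ^d is closed and bounded above componentwise (i.e., there is b ∈ ℝ^d with z ≤ b for all z ∈ M), and M is nonempty, then M satisfies the upper domination property: for every z ∈ M there exists a Pareto maximal point ẑ of M with z ≤ ẑ. -/
/-!
The part of `M` above `z` is closed and lies in the box `[z, b]`, hence is compact, so the
continuous function `w ↦ ∑ i, w i` attains its maximum on it. Since this function is strictly
monotone for the componentwise order, a maximizer is a maximal point of `M ∩ [z, ∞)`, and hence
of `M`, because `[z, ∞)` is an upper set.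
-/

open Set

theorem IsMaxOn.maximal_mem_of_strictMono {α β : Type*} [Preorder α] [Preorder β] {f : α → β}
    (hf : StrictMono f) {s : Set α} {x : α} (hx : x ∈ s) (hmax : IsMaxOn f s x) :
    Maximal (· ∈ s) x :=
  maximal_iff_forall_gt.2 ⟨hx, fun _ hxy hy => (hf hxy).not_ge (hmax hy)⟩

theorem IsCompact.exists_maximal_mem {ι : Type*} [Fintype ι] {s : Set (ι → ℝ)}
    (hs : IsCompact s) (hne : s.Nonempty) : ∃ x, Maximal (· ∈ s) x := by
  obtain ⟨x, hx, hmax⟩ :=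
    hs.exists_isMaxOn hne (continuous_finsetSum _ fun i _ => continuous_apply i).continuousOn
  exact ⟨x, hmax.maximal_mem_of_strictMono Fintype.sum_strictMono hx⟩

theorem Maximal.of_mem_inter_Ici {α : Type*} [Preorder α] {s : Set α} {z x : α}
    (h : Maximal (· ∈ s ∩ Ici z) x) : Maximal (· ∈ s) x :=
  ⟨h.prop.1, fun _ hy hxy => h.2 ⟨hy, h.prop.2.trans hxy⟩ hxy⟩

theorem IsClosed.exists_maximal_ge_of_bddAbove {ι : Type*} [Fintype ι] {s : Set (ι → ℝ)}
    (hs : IsClosed s) (hbdd : BddAbove s) {z : ι → ℝ} (hz : z ∈ s) :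
    ∃ x, z ≤ x ∧ Maximal (· ∈ s) x := by
  obtain ⟨b, hb⟩ := hbdd
  have hcompact : IsCompact (s ∩ Ici z) :=
    isCompact_Icc.of_isClosed_subset (hs.inter isClosed_Ici) fun w hw => ⟨hw.2, hb hw.1⟩
  obtain ⟨x, hx⟩ := hcompact.exists_maximal_mem ⟨z, hz, self_mem_Ici⟩
  exact ⟨x, hx.prop.2, hx.of_mem_inter_Ici⟩

theorem maximal_mem_iff_inter_Ici_eq_singleton {α : Type*} [PartialOrder α] {s : Set α} {x : α} :
    Maximal (· ∈ s) x ↔ s ∩ Ici x = {x} := by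
  refine ⟨fun h => ?_, fun h => ?_⟩
  · ext y
    exact ⟨fun hy => (h.eq_of_le hy.1 hy.2).symm, by rintro rfl; exact ⟨h.prop, le_rfl⟩⟩
  · have hx : x ∈ s ∩ Ici x := h ▸ rfl
    exact ⟨hx.1, fun y hy hxy => (h.subset ⟨hy, hxy⟩ : y = x).le⟩

theorem upper_domination_property_general {d : ℕ} (M : Set (Fin d → ℝ))
    (hM : IsClosed M) (b : Fin d → ℝ) (hb : ∀ z ∈ M, z ≤ b) :
    ∀ z ∈ M, ∃ zhat ∈ M, z ≤ zhat ∧ M ∩ {w | zhat ≤ w} = {zhat} := by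
  intro z hz
  obtain ⟨zhat, hle, hmax⟩ := hM.exists_maximal_ge_of_bddAbove ⟨b, hb⟩ hz
  exact ⟨zhat, hmax.prop, hle, maximal_mem_iff_inter_Ici_eq_singleton.1 hmax⟩

/-- A nonempty closed subset of `ℝ^d` that is bounded above
componentwise satisfies the upper domination property: every point of `M` is
dominated by a Pareto maximal point of `M` (where `zhat` is Pareto maximal iff
`M ∩ (zhat + ℝ^d_+) = {zhat}`). -/
theorem upper_domination_property {d : ℕ} (M : Set (Fin d → ℝ))
    (hM : IsClosed M) (hne : M.Nonempty) (b : Fin d → ℝ) (hb : ∀ z ∈ M, z ≤ b) :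
    ∀ z ∈ M, ∃ zhat ∈ M, z ≤ zhat ∧ M ∩ {w | zhat ≤ w} = {zhat} :=
  upper_domination_property_general M hM b hb
end

section
/- Let U : ℝ_+ → ℝ be concave and differentiable on (0,∞), δ > 0, and let X̂, u be random variables with X̂ ≥ δ a.s. and u ≥ -δ/2 a.s., u bounded. If E[U(X̂ + ε u)] ≤ E[U(X̂)] for all ε ∈ (0,1), then E[u · U'(X̂)] ≤ 0. -/
/-! By concavity, the difference quotients `(U (X + ε u) - U X) / ε` increase pointwise as
`ε ↓ 0`, towards `u * U' X`. Each of them has nonpositive expectation by the maximality of `X`,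
so the monotone convergence theorem passes the bound to the limit. The lower bounds `X ≥ δ` and
`u ≥ -δ/2` keep all evaluations of `U` in `[δ/2, ∞)`, where `U` is bounded and `0 ≤ U' ≤ U' δ`,
which provides the integrability the argument needs. -/

open MeasureTheory Filter Topology Set

theorem ConcaveOn.slope_line_anti {s : Set ℝ} {U : ℝ → ℝ} (hU : ConcaveOn ℝ s U) {x v a b : ℝ}
    (hx : x ∈ s) (hb : x + b * v ∈ s) (ha : 0 < a) (hab : a ≤ b) :
    slope (fun t => U (x + t * v)) 0 b ≤ slope (fun t => U (x + t * v)) 0 a := by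
  let line : ℝ →ᵃ[ℝ] ℝ := AffineMap.lineMap x (x + v)
  have hline : ⇑line = fun t => x + t * v := by
    ext t
    simp [line, AffineMap.lineMap_apply]
    ring
  have hφ := hU.comp_affineMap line
  rw [hline] at hφ
  have h0 : (0 : ℝ) ∈ (fun t => x + t * v) ⁻¹' s := by simpa using hx
  have ha' : a ∈ (fun t => x + t * v) ⁻¹' s := hφ.1.ordConnected.out h0 hb ⟨ha.le, hab⟩
  exact hφ.slope_anti h0 ⟨ha', ha.ne'⟩ ⟨hb, (ha.trans_le hab).ne'⟩ hab

theorem HasDerivAt.tendsto_slope_line {U : ℝ → ℝ} {x d : ℝ} (hd : HasDerivAt U d x) (v : ℝ)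
    {ε : ℕ → ℝ} (hε : Tendsto ε atTop (𝓝[≠] 0)) :
    Tendsto (fun n => slope (fun t => U (x + t * v)) 0 (ε n)) atTop (𝓝 (v * d)) := by
  have hline : HasDerivAt (fun t => x + t * v) v 0 := by
    simpa using ((hasDerivAt_id (0 : ℝ)).mul_const v).const_add x
  have hd' : HasDerivAt U d (x + 0 * v) := by simpa using hd
  rw [mul_comm]
  exact (hasDerivAt_iff_tendsto_slope.mp (hd'.comp 0 hline)).comp hε

theorem HasDerivAt.nonneg_of_monotoneOn_of_mem_nhds {U : ℝ → ℝ} {s : Set ℝ} {x d : ℝ}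
    (hd : HasDerivAt U d x) (hU : MonotoneOn U s) (hs : s ∈ 𝓝 x) : 0 ≤ d :=
  hd.hasDerivWithinAt.nonneg_of_monotoneOn
    (accPt_iff_frequently_nhdsNE.2 (show ∀ᶠ y in 𝓝[≠] x, y ∈ s from nhdsWithin_le_nhds hs).frequently)
    hU

theorem ConcaveOn.antitoneOn_of_hasDerivAt {s : Set ℝ} {U U' : ℝ → ℝ} (hU : ConcaveOn ℝ s U)
    (hd : ∀ x ∈ s, HasDerivAt U (U' x) x) : AntitoneOn U' s := by
  intro x hx y hy hxy
  simpa only [(hd x hx).deriv, (hd y hy).deriv] using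
    hU.antitoneOn_deriv (fun z hz => (hd z hz).differentiableAt) hx hy hxy

namespace MeasureTheory

variable {Ω : Type*} [MeasurableSpace Ω] {P : Measure Ω}

theorem integrable_comp_of_monotoneOn_of_le [IsFiniteMeasure P] {f : ℝ → ℝ} {a B : ℝ}
    (hf : MonotoneOn f (Ici a)) (hfB : ∀ t ∈ Ici a, f t ≤ B) {Y : Ω → ℝ} (hY : Measurable Y)
    (hYa : ∀ᵐ ω ∂P, a ≤ Y ω) : Integrable (fun ω => f (Y ω)) P := by
  have hf_max : Monotone fun t => f (max t a) := fun s t hst =>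
    hf (le_max_right s a) (le_max_right t a) (max_le_max_right a hst)
  have hmeas : AEStronglyMeasurable (fun ω => f (Y ω)) P := by
    refine (hf_max.measurable.comp hY).aestronglyMeasurable.congr ?_
    filter_upwards [hYa] with ω hω
    simp [max_eq_left hω]
  refine Integrable.of_bound hmeas (max |f a| |B|) ?_
  filter_upwards [hYa] with ω hω
  exact abs_le_max_abs_abs (hf (le_refl a) hω hω) (hfB _ hω)

theorem integrable_mul_deriv_comp [IsFiniteMeasure P] {U U' : ℝ → ℝ}
    (hUconc : ConcaveOn ℝ (Ici 0) U) (hUmono : MonotoneOn U (Ici 0))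
    (hUdiff : ∀ t : ℝ, 0 < t → HasDerivAt U (U' t) t) {δ C : ℝ} (hδ : 0 < δ) {X u : Ω → ℝ}
    (hX : Measurable X) (hu : Measurable u) (hXδ : ∀ᵐ ω ∂P, δ ≤ X ω)
    (hC : ∀ᵐ ω ∂P, |u ω| ≤ C) : Integrable (fun ω => u ω * U' (X ω)) P := by
  have hU'_anti : AntitoneOn U' (Ioi 0) :=
    (hUconc.subset Ioi_subset_Ici_self (convex_Ioi 0)).antitoneOn_of_hasDerivAt hUdiff
  have hU'_nonneg : ∀ t : ℝ, 0 < t → 0 ≤ U' t := fun t ht =>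
    (hUdiff t ht).nonneg_of_monotoneOn_of_mem_nhds hUmono (Ici_mem_nhds ht)
  have hmeas : AEStronglyMeasurable (fun ω => u ω * U' (X ω)) P := by
    refine (hu.mul ((measurable_deriv U).comp hX)).aestronglyMeasurable.congr ?_
    filter_upwards [hXδ] with ω hω
    simp [(hUdiff _ (hδ.trans_le hω)).deriv]
  refine Integrable.of_bound hmeas (C * U' δ) ?_
  filter_upwards [hXδ, hC] with ω hXω huω
  have hX_pos : 0 < X ω := hδ.trans_le hXω
  rw [norm_mul, Real.norm_of_nonneg (hU'_nonneg _ hX_pos)]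
  exact mul_le_mul huω (hU'_anti hδ hX_pos hXω) (hU'_nonneg _ hX_pos) ((abs_nonneg _).trans huω)

theorem tendsto_integral_slope_line {U U' : ℝ → ℝ} (hUconc : ConcaveOn ℝ (Ici 0) U)
    (hUdiff : ∀ t : ℝ, 0 < t → HasDerivAt U (U' t) t) {X u : Ω → ℝ}
    (hX : ∀ᵐ ω ∂P, 0 < X ω) (hXu : ∀ᵐ ω ∂P, 0 ≤ X ω + u ω) {ε : ℕ → ℝ} (hε_anti : Antitone ε)
    (hε_mem : ∀ n, ε n ∈ Ioc 0 1) (hε_lim : Tendsto ε atTop (𝓝 0))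
    (hg_int : ∀ n, Integrable (fun ω => slope (fun t => U (X ω + t * u ω)) 0 (ε n)) P)
    (hF_int : Integrable (fun ω => u ω * U' (X ω)) P) :
    Tendsto (fun n => ∫ ω, slope (fun t => U (X ω + t * u ω)) 0 (ε n) ∂P) atTop
      (𝓝 (∫ ω, u ω * U' (X ω) ∂P)) := by
  refine integral_tendsto_of_tendsto_of_monotone hg_int hF_int ?_ ?_
  · filter_upwards [hX, hXu] with ω hXω hXuω n m hnm
    have hε := hε_mem n
    refine hUconc.slope_line_anti hXω.le ?_ (hε_mem m).1 (hε_anti hnm)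
    -- `X + ε u = (1 - ε) X + ε (X + u)`
    show 0 ≤ X ω + ε n * u ω
    nlinarith [hε.1, hε.2]
  · filter_upwards [hX] with ω hXω
    exact (hUdiff _ hXω).tendsto_slope_line (u ω)
      (tendsto_nhdsWithin_of_tendsto_nhds_of_eventually_within _ hε_lim
        (Eventually.of_forall fun n => (hε_mem n).1.ne'))

end MeasureTheory

theorem first_order_condition_general
    {Ω : Type*} [MeasurableSpace Ω] (P : Measure Ω) [IsProbabilityMeasure P]
    (U U' : ℝ → ℝ) (hUconc : ConcaveOn ℝ (Set.Ici 0) U)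
    (hUmono : StrictMonoOn U (Set.Ici 0))
    (hUbdd : ∃ B : ℝ, ∀ t ∈ Set.Ici (0:ℝ), U t ≤ B)
    (hUdiff : ∀ t : ℝ, 0 < t → HasDerivAt U (U' t) t)
    (δ : ℝ) (hδ : 0 < δ)
    (Xhat u : Ω → ℝ) (hXmeas : Measurable Xhat) (humeas : Measurable u)
    (hXδ : ∀ᵐ ω ∂P, δ ≤ Xhat ω) (hu : ∀ᵐ ω ∂P, -(δ/2) ≤ u ω)
    (C : ℝ) (hubdd : ∀ᵐ ω ∂P, |u ω| ≤ C)
    (hmax : ∀ ε ∈ Set.Ioo (0:ℝ) 1,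
      ∫ ω, U (Xhat ω + ε * u ω) ∂P ≤ ∫ ω, U (Xhat ω) ∂P) :
    ∫ ω, u ω * U' (Xhat ω) ∂P ≤ 0 := by
  obtain ⟨B, hB⟩ := hUbdd
  obtain ⟨ε, hε_anti, hε_mem, hε_lim⟩ := exists_seq_strictAnti_tendsto' (zero_lt_one' ℝ)
  have hU_int : ∀ c ∈ Icc (0 : ℝ) 1, Integrable (fun ω => U (Xhat ω + c * u ω)) P := by
    intro c hc
    refine integrable_comp_of_monotoneOn_of_le (a := δ / 2)
      (hUmono.monotoneOn.mono (Ici_subset_Ici.2 (half_pos hδ).le))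
      (fun t ht => hB t (le_trans (half_pos hδ).le ht)) (hXmeas.add (humeas.const_mul c)) ?_
    filter_upwards [hXδ, hu] with ω hXω huω
    nlinarith [hc.1, hc.2]
  have hUX_int : Integrable (fun ω => U (Xhat ω)) P := by
    simpa using hU_int 0 (left_mem_Icc.2 zero_le_one)
  have hlim := tendsto_integral_slope_line hUconc hUdiff (hXδ.mono fun ω h => hδ.trans_le h)
    (by filter_upwards [hXδ, hu] with ω hXω huω; linarith) hε_anti.antitone
    (fun n => Ioo_subset_Ioc_self (hε_mem n)) hε_lim
    (fun n => by
      simpa [slope_def_field] using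
        ((hU_int _ (Ioo_subset_Icc_self (hε_mem n))).sub hUX_int).div_const (ε n))
    (integrable_mul_deriv_comp hUconc hUmono.monotoneOn hUdiff hδ hXmeas humeas hXδ hubdd)
  refine le_of_tendsto' hlim fun n => ?_
  simp only [slope_def_field, zero_mul, add_zero, sub_zero]
  rw [integral_div, integral_sub (hU_int _ (Ioo_subset_Icc_self (hε_mem n))) hUX_int]
  exact div_nonpos_of_nonpos_of_nonneg (sub_nonpos.2 (hmax _ (hε_mem n))) (hε_mem n).1.le

/-- First-order condition at a maximizer: if `U` is concave on
`ℝ_+` (continuous, strictly increasing, bounded above) with derivative `U'` on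
`(0,∞)`, `Xhat ≥ δ > 0` a.s., `u ≥ -δ/2` a.s. is bounded, and
`E[U(Xhat + ε u)] ≤ E[U(Xhat)]` for all `ε ∈ (0,1)`, then
`E[u ⬝ U'(Xhat)] ≤ 0`. -/
theorem first_order_condition
    {Ω : Type*} [MeasurableSpace Ω] (P : Measure Ω) [IsProbabilityMeasure P]
    (U U' : ℝ → ℝ) (hUconc : ConcaveOn ℝ (Set.Ici 0) U)
    (hUcont : ContinuousOn U (Set.Ici 0))
    (hUmono : StrictMonoOn U (Set.Ici 0))
    (hUbdd : ∃ B : ℝ, ∀ t ∈ Set.Ici (0:ℝ), U t ≤ B)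
    (hUdiff : ∀ t : ℝ, 0 < t → HasDerivAt U (U' t) t)
    (δ : ℝ) (hδ : 0 < δ)
    (Xhat u : Ω → ℝ) (hXmeas : Measurable Xhat) (humeas : Measurable u)
    (hXδ : ∀ᵐ ω ∂P, δ ≤ Xhat ω) (hu : ∀ᵐ ω ∂P, -(δ/2) ≤ u ω)
    (C : ℝ) (hubdd : ∀ᵐ ω ∂P, |u ω| ≤ C)
    (hmax : ∀ ε ∈ Set.Ioo (0:ℝ) 1,
      ∫ ω, U (Xhat ω + ε * u ω) ∂P ≤ ∫ ω, U (Xhat ω) ∂P) :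
    ∫ ω, u ω * U' (Xhat ω) ∂P ≤ 0 :=
  first_order_condition_general P U U' hUconc hUmono hUbdd hUdiff δ hδ Xhat u hXmeas humeas hXδ hu C
    hubdd hmax
end

section
/- Let (Ω, F_t, P) be given, Π_t(·) a bid-ask matrix valued F_t-measurable map, and let Z_t be an F_t-measurable ℝ^d_+-valued integrable random vector. Suppose that for every bounded F_t-measurable random vector u with u(ω) ∈ -K(Π_t(ω)) a.s. and u ≥ -c a.s. for some constant c > 0, one has E[⟨Z_t, u⟩] ≤ 0. Then Z_t(ω) ∈ K*(Π_t(ω)) for a.e. ω. -/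
open MeasureTheory Finset

/-- The `i`-th standard basis vector of `ℝ^d`. -/
def stdBasis {d : ℕ} (i : Fin d) : Fin d → ℝ := Pi.single i 1

/-- The solvency cone `-K(Π)`: the convex cone generated by
`{-e^i : i} ∪ {-π^{ij} e^i + e^j : i, j}`. -/
def negK {d : ℕ} (π : Matrix (Fin d) (Fin d) ℝ) : Set (Fin d → ℝ) :=
  {v | ∃ a : Fin d → ℝ, ∃ b : Fin d → Fin d → ℝ,
    (∀ i, 0 ≤ a i) ∧ (∀ i j, 0 ≤ b i j) ∧
    v = (∑ i, a i • (-stdBasis i)) +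
        ∑ i, ∑ j, b i j • (-(π i j) • stdBasis i + stdBasis j)}

/-- `K*(Π)` in its explicit description: nonnegative vectors `w` with
`w j ≤ π i j * w i` for all `i, j` (the polar of `-K(Π)`). -/
def KstarIneq {d : ℕ} (π : Matrix (Fin d) (Fin d) ℝ) : Set (Fin d → ℝ) :=
  {w | (∀ i, 0 ≤ w i) ∧ ∀ i j, w j ≤ π i j * w i}

lemma stdBasis_apply {d : ℕ} (i k : Fin d) : stdBasis i k = if k = i then 1 else 0 := by
  simp [stdBasis, Pi.single_apply]

lemma abs_stdBasis_le {d : ℕ} (i k : Fin d) : |stdBasis i k| ≤ 1 := by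
  rw [stdBasis_apply]; split <;> simp

lemma zero_mem_negK {d : ℕ} (π : Matrix (Fin d) (Fin d) ℝ) : (0 : Fin d → ℝ) ∈ negK π := by
  exact ⟨0, 0, fun i => le_refl 0, fun i j => le_refl 0, by simp⟩

lemma gen_mem_negK {d : ℕ} (π : Matrix (Fin d) (Fin d) ℝ) (i j : Fin d) :
    (fun k => -(π i j) * stdBasis i k + stdBasis j k) ∈ negK π := by
  refine ⟨0, fun i' j' => if i' = i ∧ j' = j then 1 else 0,
    fun _ => le_rfl, fun i' j' => by positivity, ?_⟩
  have h1 : ∀ i' : Fin d,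
      (∑ j', (if i' = i ∧ j' = j then (1:ℝ) else 0) • (-(π i' j') • stdBasis i' + stdBasis j'))
      = if i' = i then (-(π i j) • stdBasis i + stdBasis j) else 0 := by
    intro i'
    by_cases h : i' = i
    · subst h
      simp only [ite_smul, one_smul, zero_smul, true_and, if_true]
      rw [Finset.sum_ite_eq' Finset.univ j (fun x => -π i' x • stdBasis i' + stdBasis x)]
      simp
    · simp [h]
  rw [Finset.sum_congr rfl fun i' _ => h1 i',
    Finset.sum_ite_eq' Finset.univ i (fun _ => -(π i j) • stdBasis i + stdBasis j)]
  funext k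
  simp

/-- If an integrable nonnegative `F_t`-measurable random vector
`Z` satisfies `E[⟨Z, u⟩] ≤ 0` for every bounded `F_t`-measurable selection `u`
of the cones `-K(Π_t(·))` bounded below by a constant, then `Z(ω) ∈ K*(Π_t(ω))`
for a.e. `ω`. -/
theorem ae_mem_polar_of_expectation_nonpos
    {Ω : Type*} [MeasurableSpace Ω] (P : Measure Ω) [IsProbabilityMeasure P]
    {d : ℕ} (Pi0 : Ω → Matrix (Fin d) (Fin d) ℝ) (hPimeas : ∀ i j, Measurable fun ω ↦ Pi0 ω i j)
    (hPi : ∀ ω, (∀ i j, 0 < Pi0 ω i j) ∧ (∀ i, Pi0 ω i i = 1) ∧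
      (∀ i j k, Pi0 ω i j ≤ Pi0 ω i k * Pi0 ω k j))
    (Z : Ω → Fin d → ℝ) (hZmeas : Measurable Z)
    (hZint : ∀ i, Integrable (fun ω ↦ Z ω i) P)
    (hZpos : ∀ᵐ ω ∂P, ∀ i, 0 ≤ Z ω i)
    (hexp : ∀ u : Ω → Fin d → ℝ, Measurable u →
      (∀ᵐ ω ∂P, u ω ∈ negK (Pi0 ω)) →
      (∃ c : ℝ, 0 < c ∧ (∀ᵐ ω ∂P, ∀ i, -c ≤ u ω i) ∧ (∀ᵐ ω ∂P, ∀ i, |u ω i| ≤ c)) →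
      ∫ ω, (∑ i, Z ω i * u ω i) ∂P ≤ 0) :
    ∀ᵐ ω ∂P, Z ω ∈ KstarIneq (Pi0 ω) := by
  have hZmi : ∀ i, Measurable fun ω => Z ω i := fun i => (measurable_pi_apply i).comp hZmeas
  -- the exceptional sets
  set S : Fin d → Fin d → ℕ → Set Ω := fun i j n =>
    {ω | Pi0 ω i j * Z ω i < Z ω j ∧ Pi0 ω i j ≤ (n : ℝ)} with hSdef
  have hSmeas : ∀ i j n, MeasurableSet (S i j n) := by
    intro i j n
    exact (measurableSet_lt ((hPimeas i j).mul (hZmi i)) (hZmi j)).inter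
      (measurableSet_le (hPimeas i j) measurable_const)
  have key : ∀ i j n, P (S i j n) = 0 := by
    intro i j n
    -- the test selection
    set u : Ω → Fin d → ℝ :=
      fun ω => (S i j n).indicator (fun ω k => -(Pi0 ω i j) * stdBasis i k + stdBasis j k) ω
      with hudef
    have humeas : Measurable u := by
      apply Measurable.indicator ?_ (hSmeas i j n)
      apply measurable_pi_lambda
      intro k
      exact (((hPimeas i j).neg).mul measurable_const).add measurable_const
    have humem : ∀ᵐ ω ∂P, u ω ∈ negK (Pi0 ω) := by
      refine Filter.Eventually.of_forall fun ω => ?_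
      by_cases h : ω ∈ S i j n
      · rw [hudef]; simp only [Set.indicator_of_mem h]; exact gen_mem_negK _ i j
      · rw [hudef]; simp only [Set.indicator_of_notMem h]; exact zero_mem_negK _
    have hubdd : ∃ c : ℝ, 0 < c ∧ (∀ᵐ ω ∂P, ∀ k, -c ≤ u ω k) ∧ (∀ᵐ ω ∂P, ∀ k, |u ω k| ≤ c) := by
      refine ⟨(n : ℝ) + 1, by positivity, ?_, ?_⟩ <;>
        refine Filter.Eventually.of_forall fun ω => fun k => ?_
      · refine neg_le_of_abs_le ?_
        by_cases h : ω ∈ S i j n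
        · rw [hudef]; simp only [Set.indicator_of_mem h]
          calc |(-(Pi0 ω i j) * stdBasis i k + stdBasis j k)|
              ≤ |(-(Pi0 ω i j)) * stdBasis i k| + |stdBasis j k| := abs_add_le _ _
            _ ≤ Pi0 ω i j * 1 + 1 := by
                rw [abs_mul, abs_neg, abs_of_pos ((hPi ω).1 i j)]
                gcongr
                exacts [((hPi ω).1 i j).le, abs_stdBasis_le i k, abs_stdBasis_le j k]
            _ ≤ (n : ℝ) + 1 := by rw [mul_one]; gcongr; exact h.2
        · rw [hudef]; simp only [Set.indicator_of_notMem h, Pi.zero_apply, abs_zero]; positivity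
      · by_cases h : ω ∈ S i j n
        · rw [hudef]; simp only [Set.indicator_of_mem h]
          calc |(-(Pi0 ω i j) * stdBasis i k + stdBasis j k)|
              ≤ |(-(Pi0 ω i j)) * stdBasis i k| + |stdBasis j k| := abs_add_le _ _
            _ ≤ Pi0 ω i j * 1 + 1 := by
                rw [abs_mul, abs_neg, abs_of_pos ((hPi ω).1 i j)]
                gcongr
                exacts [((hPi ω).1 i j).le, abs_stdBasis_le i k, abs_stdBasis_le j k]
            _ ≤ (n : ℝ) + 1 := by rw [mul_one]; gcongr; exact h.2
        · rw [hudef]; simp only [Set.indicator_of_notMem h, Pi.zero_apply, abs_zero]; positivity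
    have hint := hexp u humeas humem hubdd
    -- rewrite the integrand
    set g : Ω → ℝ := fun ω => (S i j n).indicator (fun ω => Z ω j - Pi0 ω i j * Z ω i) ω with hgdef
    have hgeq : ∀ ω, (∑ k, Z ω k * u ω k) = g ω := by
      intro ω
      by_cases h : ω ∈ S i j n
      · rw [hudef, hgdef]
        simp only [Set.indicator_of_mem h]
        have : ∀ k, Z ω k * (-(Pi0 ω i j) * stdBasis i k + stdBasis j k)
            = -(Pi0 ω i j) * (Z ω k * stdBasis i k) + Z ω k * stdBasis j k := by
          intro k; ring
        rw [Finset.sum_congr rfl fun k _ => this k, Finset.sum_add_distrib, ← Finset.mul_sum]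
        have e1 : ∀ m : Fin d, (∑ k, Z ω k * stdBasis m k) = Z ω m := by
          intro m
          simp [stdBasis_apply, Finset.sum_ite_eq]
        rw [e1, e1]; ring
      · rw [hudef, hgdef]
        simp [Set.indicator_of_notMem h]
    rw [integral_congr_ae (Filter.Eventually.of_forall hgeq)] at hint
    have hgnn : ∀ ω, 0 ≤ g ω := by
      intro ω
      by_cases h : ω ∈ S i j n
      · rw [hgdef]; simp only [Set.indicator_of_mem h]; linarith [h.1]
      · rw [hgdef]; simp [Set.indicator_of_notMem h]
    have hgint : Integrable g P := by
      refine Integrable.mono' (((hZint j).abs.add (((hZint i)).abs.const_mul (n : ℝ)))) ?_ ?_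
      · exact (((hZmi j).sub ((hPimeas i j).mul (hZmi i))).indicator (hSmeas i j n)).aestronglyMeasurable
      · refine Filter.Eventually.of_forall fun ω => ?_
        rw [Real.norm_eq_abs]
        by_cases h : ω ∈ S i j n
        · rw [hgdef]; simp only [Set.indicator_of_mem h, Pi.add_apply]
          calc |Z ω j - Pi0 ω i j * Z ω i| ≤ |Z ω j| + |Pi0 ω i j * Z ω i| := abs_sub _ _
            _ ≤ |Z ω j| + (n : ℝ) * |Z ω i| := by
                rw [abs_mul, abs_of_pos ((hPi ω).1 i j)]
                gcongr
                exact h.2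
        · rw [hgdef]; simp only [Set.indicator_of_notMem h, abs_zero, Pi.add_apply]
          positivity
    have hzero : g =ᵐ[P] 0 := by
      have h0 : ∫ ω, g ω ∂P = 0 := le_antisymm hint (integral_nonneg hgnn)
      exact (integral_eq_zero_iff_of_nonneg hgnn hgint).mp h0
    -- conclude S is null
    have : S i j n ⊆ {ω | ¬ g ω = (0 : Ω → ℝ) ω} := by
      intro ω h
      have : 0 < g ω := by
        rw [hgdef]; simp only [Set.indicator_of_mem h]; linarith [h.1]
      simpa using this.ne'
    exact measure_mono_null this hzero
  -- combine
  have hall : ∀ᵐ ω ∂P, ∀ i j n, ω ∉ S i j n := by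
    rw [ae_all_iff]; intro i
    rw [ae_all_iff]; intro j
    rw [ae_all_iff]; intro n
    rw [ae_iff]; simpa using key i j n
  filter_upwards [hZpos, hall] with ω h1 h2
  refine ⟨h1, fun i j => ?_⟩
  by_contra hc
  push_neg at hc
  obtain ⟨n, hn⟩ := exists_nat_ge (Pi0 ω i j)
  exact h2 i j n ⟨hc, hn⟩
end
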